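/- Let a > 0 and let f : ℝ → ℂ be a Schwartz function. Then for every z ∈ ℂ, [B_{a/2}( f″ − a²·x²·f )](z) = −2a·z·(B_{a/2}f)′(z) − a·(B_{a/2}f)(z); that is, the Bargmann transform intertwines the real harmonic oscillator h_x^a = ∂²/∂x² − a²x² with the complex Euler operator E_z^a = −2a·z·∂/∂z − a. -/

import Mathlib

/-!
With `K_z(x) = exp(a x z - a x²/2 - a z²/4)` one has `∂ₓK_z = a (z - x) K_z` and
`∂_z K_z = (a x - a z / 2) K_z`, so `(∂ₓ² - a² x²) K_z = (-2 a z ∂_z - a) K_z`: on the kernel the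
harmonic oscillator in `x` is the Euler operator in `z`. Two integrations by parts move
`∂ₓ²` from `f` onto the kernel, and differentiation under the integral sign turns `∂_z` of the
kernel into `(B f)'`. Every integrand is a Schwartz function times a polynomial times `K_z`,
and `|K_z(x)| ≤ exp(a |z|² / 4)`, which gives all the integrability and domination needed.
-/

open Complex Real SchwartzMap

/-- The (parametrized) Bargmann transform `B_{a/2}`:
`(B_{a/2}f)(z) = (a/π)^{1/4} ∫_ℝ f(x) e^{axz − (a/2)x² − (a/4)z²} dx`. -/
noncomputable def bargmann (a : ℝ) (f : ℝ → ℂ) (z : ℂ) : ℂ :=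
  ((a / Real.pi) ^ ((1 : ℝ) / 4) : ℝ) *
    ∫ x : ℝ, f x * Complex.exp (a * x * z - (a / 2) * x ^ 2 - (a / 4) * z ^ 2)

open MeasureTheory Polynomial

noncomputable def bargmannKernel (a : ℝ) (z : ℂ) (x : ℝ) : ℂ :=
  cexp (a * x * z - (a / 2) * x ^ 2 - (a / 4) * z ^ 2)

theorem bargmann_eq_mul_integral (a : ℝ) (f : ℝ → ℂ) (z : ℂ) :
    bargmann a f z = ((a / π) ^ ((1 : ℝ) / 4) : ℝ) * ∫ x, f x * bargmannKernel a z x :=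
  rfl

@[fun_prop]
theorem continuous_bargmannKernel (a : ℝ) (z : ℂ) : Continuous (bargmannKernel a z) := by
  unfold bargmannKernel
  fun_prop

theorem hasDerivAt_bargmannKernel (a : ℝ) (z : ℂ) (x : ℝ) :
    HasDerivAt (bargmannKernel a z) (a * (z - x) * bargmannKernel a z x) x := by
  have h : HasDerivAt (fun u : ℂ => a * u * z - a / 2 * u ^ 2 - a / 4 * z ^ 2) (a * (z - x)) x :=
    (((((hasDerivAt_id (x : ℂ)).const_mul (a : ℂ)).mul_const z).sub
      ((hasDerivAt_pow 2 (x : ℂ)).const_mul (a / 2 : ℂ))).sub_const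
      ((a / 4 : ℂ) * z ^ 2)).congr_deriv
      (by simp only [mul_one, Nat.cast_ofNat, Nat.add_one_sub_one, pow_one]; ring)
  exact h.cexp.comp_ofReal.congr_deriv (mul_comm _ _)

theorem hasDerivAt_bargmannKernel_complex (a x : ℝ) (z : ℂ) :
    HasDerivAt (fun w => bargmannKernel a w x) ((a * x - a / 2 * z) * bargmannKernel a z x) z := by
  have h : HasDerivAt (fun w : ℂ => a * x * w - a / 2 * x ^ 2 - a / 4 * w ^ 2)
      (a * x - a / 2 * z) z :=
    ((((hasDerivAt_id z).const_mul ((a : ℂ) * x)).sub_const ((a / 2 : ℂ) * x ^ 2)).sub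
      ((hasDerivAt_pow 2 z).const_mul (a / 4 : ℂ))).congr_deriv
      (by simp only [mul_one, Nat.cast_ofNat, Nat.add_one_sub_one, pow_one]; ring)
  exact h.cexp.congr_deriv (mul_comm _ _)

theorem norm_bargmannKernel_le {a : ℝ} (ha : 0 ≤ a) (z : ℂ) (x : ℝ) :
    ‖bargmannKernel a z x‖ ≤ Real.exp (a / 4 * ‖z‖ ^ 2) := by
  rw [bargmannKernel, norm_exp, Real.exp_le_exp, Complex.sq_norm, normSq_apply]
  simp only [sub_re, mul_re, mul_im, ofReal_re, ofReal_im, div_ofNat_re, div_ofNat_im, pow_two,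
    zero_mul, mul_zero, sub_zero]
  nlinarith [mul_nonneg ha (sq_nonneg (x - z.re))]

theorem SchwartzMap.integrable_ofReal_pow_mul (g : 𝓢(ℝ, ℂ)) (n : ℕ) :
    Integrable fun x : ℝ => (x : ℂ) ^ n * g x :=
  (g.integrable_pow_mul volume n).mono' (by fun_prop) (.of_forall fun x => by simp)

theorem integrable_mul_eval_mul_bargmannKernel {a : ℝ} (ha : 0 ≤ a) (g : 𝓢(ℝ, ℂ)) (P : ℂ[X])
    (z : ℂ) : Integrable fun x : ℝ => g x * (P.eval (x : ℂ) * bargmannKernel a z x) := by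
  induction P using Polynomial.induction_on' with
  | add P Q hP hQ => simpa only [eval_add, add_mul, mul_add] using hP.fun_add hQ
  | monomial n c =>
    have h := ((g.integrable_ofReal_pow_mul n).const_mul c).mul_bdd
      (continuous_bargmannKernel a z).aestronglyMeasurable
      (.of_forall (norm_bargmannKernel_le ha z))
    refine h.congr (.of_forall fun x => ?_)
    simp only [eval_monomial]
    ring

theorem hasDerivAt_eval_mul_bargmannKernel (a : ℝ) (P : ℂ[X]) (z : ℂ) (x : ℝ) :
    HasDerivAt (fun x : ℝ => P.eval (x : ℂ) * bargmannKernel a z x)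
      ((derivative P + C (a : ℂ) * (C z - X) * P).eval (x : ℂ) * bargmannKernel a z x) x :=
  ((P.hasDerivAt (x : ℂ)).comp_ofReal.mul (hasDerivAt_bargmannKernel a z x)).congr_deriv
    (by simp only [eval_add, eval_mul, eval_C, eval_sub, eval_X]; ring)

theorem integral_deriv_mul_eval_mul_bargmannKernel {a : ℝ} (ha : 0 ≤ a) (g : 𝓢(ℝ, ℂ))
    (P : ℂ[X]) (z : ℂ) :
    ∫ x, deriv g x * (P.eval (x : ℂ) * bargmannKernel a z x) =
      -∫ x, g x * ((derivative P + C (a : ℂ) * (C z - X) * P).eval (x : ℂ) *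
        bargmannKernel a z x) := by
  rw [integral_mul_deriv_eq_deriv_mul_of_integrable (fun x _ => g.hasDerivAt x)
    (fun x _ => hasDerivAt_eval_mul_bargmannKernel a P z x)
    (integrable_mul_eval_mul_bargmannKernel ha g _ z)
    (integrable_mul_eval_mul_bargmannKernel ha (derivCLM ℝ ℂ g) P z)
    (integrable_mul_eval_mul_bargmannKernel ha g P z), neg_neg]

theorem hasDerivAt_integral_mul_bargmannKernel {a : ℝ} (ha : 0 ≤ a) (g : 𝓢(ℝ, ℂ)) (z : ℂ) :
    HasDerivAt (fun w => ∫ x, g x * bargmannKernel a w x)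
      (∫ x, g x * ((a * x - a / 2 * z) * bargmannKernel a z x)) z := by
  set R := ‖z‖ + 1
  set M := Real.exp (a / 4 * R ^ 2)
  have hR : ∀ w ∈ Metric.ball z 1, ‖w‖ ≤ R := fun w hw => by
    linarith [norm_le_norm_add_norm_sub' w z, mem_ball_iff_norm.1 hw]
  have hK : ∀ w ∈ Metric.ball z 1, ∀ x, ‖bargmannKernel a w x‖ ≤ M := fun w hw x =>
    (norm_bargmannKernel_le ha w x).trans <| Real.exp_le_exp.2 <| by
      gcongr; exact hR w hw
  have hfactor : ∀ w ∈ Metric.ball z 1, ∀ x : ℝ, ‖(a * x - a / 2 * w : ℂ)‖ ≤ a * (‖x‖ + R) :=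
    fun w hw x => by
      refine (norm_sub_le _ _).trans ?_
      simp only [norm_mul, norm_div, norm_real, Real.norm_of_nonneg ha, RCLike.norm_ofNat]
      nlinarith [hR w hw, norm_nonneg w]
  refine (hasDerivAt_integral_of_dominated_loc_of_deriv_le (Metric.ball_mem_nhds z one_pos)
    (bound := fun x => a * M * (‖x‖ * ‖g x‖ + R * ‖g x‖))
    (.of_forall fun w => (g.continuous.mul (continuous_bargmannKernel a w)).aestronglyMeasurable)
    (g.integrable.mul_bdd (continuous_bargmannKernel a z).aestronglyMeasurable
      (.of_forall (norm_bargmannKernel_le ha z)))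
    (Continuous.aestronglyMeasurable (by fun_prop)) (.of_forall fun x w hw => ?_) ?_
    (.of_forall fun x w _ => (hasDerivAt_bargmannKernel_complex a x w).const_mul (g x))).2
  · rw [norm_mul, norm_mul]
    calc ‖g x‖ * (‖(a * x - a / 2 * w : ℂ)‖ * ‖bargmannKernel a w x‖)
        ≤ ‖g x‖ * (a * (‖x‖ + R) * M) := by
          gcongr
          exacts [hfactor w hw x, hK w hw x]
      _ = a * M * (‖x‖ * ‖g x‖ + R * ‖g x‖) := by ring
  · simpa using ((g.integrable_pow_mul volume 1).add
      ((g.integrable_pow_mul volume 0).const_mul R)).const_mul (a * M)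

theorem hasDerivAt_bargmann {a : ℝ} (ha : 0 ≤ a) (f : 𝓢(ℝ, ℂ)) (z : ℂ) :
    HasDerivAt (bargmann a f) (((a / π) ^ ((1 : ℝ) / 4) : ℝ) *
      ∫ x : ℝ, f x * ((a * x - a / 2 * z) * bargmannKernel a z x)) z :=
  (hasDerivAt_integral_mul_bargmannKernel ha f z).const_mul _

theorem integral_deriv_deriv_mul_bargmannKernel {a : ℝ} (ha : 0 ≤ a) (f : 𝓢(ℝ, ℂ)) (z : ℂ) :
    ∫ x, deriv (deriv f) x * bargmannKernel a z x =
      ∫ x, f x * ((a ^ 2 * (z - x) ^ 2 - a) * bargmannKernel a z x) := by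
  have h₁ := integral_deriv_mul_eval_mul_bargmannKernel ha (derivCLM ℝ ℂ f) 1 z
  have h₂ := integral_deriv_mul_eval_mul_bargmannKernel ha f (C (a : ℂ) * (C z - X)) z
  simp only [eval_one, one_mul, derivative_one, zero_add, mul_one, derivCLM_apply] at h₁
  rw [show deriv (derivCLM ℝ ℂ f) = deriv (deriv f) from rfl] at h₁
  rw [h₁, h₂, neg_neg]
  congr 1; ext x
  congr 2
  simp only [derivative_mul, derivative_C, derivative_sub, derivative_X, zero_mul, zero_sub,
    mul_neg, mul_one, zero_add, eval_add, eval_neg, eval_C, eval_mul, eval_sub, eval_X]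
  ring

theorem integral_oscillator_mul_bargmannKernel {a : ℝ} (ha : 0 ≤ a) (f : 𝓢(ℝ, ℂ)) (z : ℂ) :
    ∫ x : ℝ, (deriv (deriv f) x - (a : ℂ) ^ 2 * (x : ℂ) ^ 2 * f x) * bargmannKernel a z x =
      -2 * a * z * (∫ x : ℝ, f x * ((a * x - a / 2 * z) * bargmannKernel a z x)) -
        a * ∫ x : ℝ, f x * bargmannKernel a z x := by
  have hint (g : 𝓢(ℝ, ℂ)) (P : ℂ[X]) {v : ℝ → ℂ}
      (hv : ∀ x : ℝ, g x * (P.eval (x : ℂ) * bargmannKernel a z x) = v x) : Integrable v :=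
    (integrable_mul_eval_mul_bargmannKernel ha g P z).congr (.of_forall hv)
  have hK : Integrable fun x : ℝ => f x * bargmannKernel a z x := hint f 1 fun x => by simp
  have hK_z : Integrable fun x : ℝ => f x * ((a * x - a / 2 * z) * bargmannKernel a z x) :=
    hint f (C (a : ℂ) * X - C (a / 2 * z)) fun x => by simp
  have hK_xx : Integrable fun x : ℝ => f x * ((a ^ 2 * (z - x) ^ 2 - a) * bargmannKernel a z x) :=
    hint f (C (a : ℂ) ^ 2 * (C z - X) ^ 2 - C (a : ℂ)) fun x => by simp
  have hx2K : Integrable fun x : ℝ => (a : ℂ) ^ 2 * (x : ℂ) ^ 2 * f x * bargmannKernel a z x :=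
    hint f (C (a : ℂ) ^ 2 * X ^ 2) fun x => by simp only [eval_mul, eval_pow, eval_C, eval_X]; ring
  have hf''K : Integrable fun x : ℝ => deriv (deriv f) x * bargmannKernel a z x :=
    hint (derivCLM ℝ ℂ (derivCLM ℝ ℂ f)) 1 fun x => by rw [eval_one, one_mul]; rfl
  calc _ = (∫ x : ℝ, deriv (deriv f) x * bargmannKernel a z x) -
        ∫ x : ℝ, (a : ℂ) ^ 2 * (x : ℂ) ^ 2 * f x * bargmannKernel a z x := by
        rw [← integral_sub hf''K hx2K]; simp only [sub_mul]
    _ = (∫ x : ℝ, f x * ((a ^ 2 * (z - x) ^ 2 - a) * bargmannKernel a z x)) -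
        ∫ x : ℝ, (a : ℂ) ^ 2 * (x : ℂ) ^ 2 * f x * bargmannKernel a z x := by
        rw [integral_deriv_deriv_mul_bargmannKernel ha]
    _ = ∫ x : ℝ, (-2 * a * z * (f x * ((a * x - a / 2 * z) * bargmannKernel a z x)) -
        a * (f x * bargmannKernel a z x)) := by
        rw [← integral_sub hK_xx hx2K]; congr 1; ext x; ring
    _ = _ := by
        rw [integral_sub (hK_z.const_mul _) (hK.const_mul _), integral_const_mul,
          integral_const_mul]

/-- [B_{a/2}(f'' - a^2 x^2 f)](z) = -2 a z (B f)'(z) - a (B f)(z) for Schwartz f: the Bargmann transform intertwines the real harmonic oscillator with the complex Euler operator. -/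
theorem bargmann_harmonic_oscillator (a : ℝ) (ha : 0 < a) (f : SchwartzMap ℝ ℂ) (z : ℂ) :
    bargmann a
        (fun x : ℝ => deriv (deriv (fun y : ℝ => f y)) x
          - (a : ℂ) ^ 2 * (x : ℂ) ^ 2 * f x) z =
      -2 * (a : ℂ) * z * deriv (bargmann a (fun x : ℝ => f x)) z
        - (a : ℂ) * bargmann a (fun x : ℝ => f x) z := by
  rw [(hasDerivAt_bargmann ha.le f z).deriv, bargmann_eq_mul_integral, bargmann_eq_mul_integral,
    integral_oscillator_mul_bargmannKernel ha.le]
  ring
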